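/- arXiv:1307.7887 — 3 statements merged into one kernel-verified Lean document; each statement's English description precedes it below -/
import Mathlib

section
/- Let (F, σ) be a difference field with constant field K = {c ∈ F : σ(c) = c}, let a₀, a₁ ∈ F with a₀·a₁ ≠ 0, and let f₁, …, fₙ ∈ F. Then the K-vector space V = {(c₁, …, cₙ, q) ∈ Kⁿ × F : a₁·σ(q) + a₀·q = c₁·f₁ + ⋯ + cₙ·fₙ} has dimension at most n + 1. -/
/-!
A solution with `c = 0` is a solution `q` of the homogeneous equation, and for two of them with
`q₀ ≠ 0` cross-multiplying `a₁ σ q = -a₀ q` and `a₁ σ q₀ = -a₀ q₀` shows that `q / q₀` is a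
constant; so the homogeneous solutions form a `K`-space of dimension at most one. By rank–nullity
for the projection `(c, q) ↦ c` onto `Kⁿ`, the solution space then has dimension at most `n + 1`,
and any `n + 2` solutions are linearly dependent over `K`.
-/

universe u

open LinearMap

section

variable {R : Type*} {V W : Type u} [DivisionRing R] [AddCommGroup V] [Module R V]
  [AddCommGroup W] [Module R W]

theorem Submodule.rank_le_rank_add_rank_comap_inr (S : Submodule R (V × W)) :
    Module.rank R S ≤ Module.rank R V + Module.rank R (S.comap (inr R V W)) := by
  set π := LinearMap.fst R V W ∘ₗ S.subtype
  have hπ : ∀ x : ker π, ((x : S) : V × W) = (0, ((x : S) : V × W).2) :=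
    fun x ↦ Prod.ext (mem_ker.1 x.2) rfl
  let ψ : ker π →ₗ[R] S.comap (inr R V W) :=
    (LinearMap.snd R V W ∘ₗ S.subtype ∘ₗ (ker π).subtype).codRestrict _
      fun x ↦ by simp [← hπ x]
  have hψ : Function.Injective ψ := fun x y hxy ↦ by
    have h : ((x : S) : V × W).2 = ((y : S) : V × W).2 := congrArg Subtype.val hxy
    ext1; ext1
    rw [hπ x, hπ y, h]
  rw [← π.rank_range_add_rank_ker]
  gcongr
  · exact Submodule.rank_le _
  · exact ψ.rank_le_of_injective hψ

theorem Submodule.not_linearIndependent_of_rank_lt {ι : Type*} [Fintype ι] {S : Submodule R W}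
    {w : ι → W} (hw : ∀ i, w i ∈ S) (hS : Module.rank R S < Fintype.card ι) :
    ¬LinearIndependent R w := by
  intro hli
  have hli' : LinearIndependent R (fun i ↦ (⟨w i, hw i⟩ : S)) := hli.of_comp S.subtype
  have hcard := hli'.cardinal_lift_le_rank
  rw [Cardinal.mk_fintype, Cardinal.lift_natCast] at hcard
  exact (hcard.trans_lt (Cardinal.lift_lt_nat_iff.2 hS)).false

end

namespace DifferenceField

variable {F : Type*} [Field F] (σ : F ≃+* F)

abbrev constants : Subfield F := (σ : F →+* F).eqLocusField (RingHom.id F)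

theorem apply_constants (k : constants σ) : σ k = k := k.2

def firstOrderOp (a₀ a₁ : F) : F →ₗ[constants σ] F where
  toFun q := a₁ * σ q + a₀ * q
  map_add' q r := by simp only [map_add]; ring
  map_smul' k q := by
    simp only [Subfield.smul_def, smul_eq_mul, map_mul, apply_constants, RingHom.id_apply]; ring

theorem firstOrderOp_apply (a₀ a₁ q : F) : firstOrderOp σ a₀ a₁ q = a₁ * σ q + a₀ * q := rfl

theorem div_mem_constants_of_mem_ker {a₀ a₁ : F} (ha₁ : a₁ ≠ 0) {q r : F}
    (hq : q ∈ ker (firstOrderOp σ a₀ a₁)) (hr : r ∈ ker (firstOrderOp σ a₀ a₁)) (hr₀ : r ≠ 0) :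
    q / r ∈ constants σ := by
  rw [mem_ker, firstOrderOp_apply] at hq hr
  have hσr : σ r ≠ 0 := by simpa using hr₀
  have hcross : σ q * r = q * σ r := mul_left_cancel₀ ha₁ (by linear_combination r * hq - q * hr)
  show σ (q / r) = q / r
  rw [map_div₀, div_eq_div_iff hσr hr₀, hcross]

theorem rank_ker_firstOrderOp_le_one (a₀ : F) {a₁ : F} (ha₁ : a₁ ≠ 0) :
    Module.rank (constants σ) (ker (firstOrderOp σ a₀ a₁)) ≤ 1 := by
  rw [rank_submodule_le_one_iff']
  by_cases h : ∃ r ∈ ker (firstOrderOp σ a₀ a₁), r ≠ 0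
  · obtain ⟨r, hr, hr₀⟩ := h
    refine ⟨r, fun q hq ↦ Submodule.mem_span_singleton.2
      ⟨⟨q / r, div_mem_constants_of_mem_ker σ ha₁ hq hr hr₀⟩, ?_⟩⟩
    simp [Subfield.smul_def, hr₀]
  · push Not at h
    exact ⟨0, fun q hq ↦ by simp [h q hq]⟩

variable {n : ℕ}

def solutionSpace (a₀ a₁ : F) (f : Fin n → F) :
    Submodule (constants σ) ((Fin n → constants σ) × F) :=
  ker (firstOrderOp σ a₀ a₁ ∘ₗ snd _ _ _ - Fintype.linearCombination (constants σ) f ∘ₗ fst _ _ _)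

theorem mem_solutionSpace {a₀ a₁ : F} {f : Fin n → F} {p : (Fin n → constants σ) × F} :
    p ∈ solutionSpace σ a₀ a₁ f ↔ a₁ * σ p.2 + a₀ * p.2 = ∑ i, (p.1 i : F) * f i := by
  simp [solutionSpace, sub_eq_zero, firstOrderOp_apply, Fintype.linearCombination_apply,
    Subfield.smul_def]

theorem comap_inr_solutionSpace (a₀ a₁ : F) (f : Fin n → F) :
    (solutionSpace σ a₀ a₁ f).comap (inr _ _ _) = ker (firstOrderOp σ a₀ a₁) := by
  ext q
  simp [mem_solutionSpace, firstOrderOp_apply]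

theorem rank_solutionSpace_le (a₀ : F) {a₁ : F} (ha₁ : a₁ ≠ 0) (f : Fin n → F) :
    Module.rank (constants σ) (solutionSpace σ a₀ a₁ f) ≤ n + 1 := by
  calc Module.rank (constants σ) (solutionSpace σ a₀ a₁ f)
      ≤ Module.rank (constants σ) (Fin n → constants σ)
          + Module.rank (constants σ) (ker (firstOrderOp σ a₀ a₁)) := by
        rw [← comap_inr_solutionSpace]
        exact Submodule.rank_le_rank_add_rank_comap_inr _
    _ ≤ n + 1 := by
        rw [rank_fun', Fintype.card_fin]
        gcongr
        exact rank_ker_firstOrderOp_le_one σ a₀ ha₁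

end DifferenceField

open DifferenceField in
/-- the FPLDE solution space has dimension at most n+1 over the
constant field, expressed as: any n+2 solutions are linearly dependent over
the constants. -/
theorem stmt_1 {F : Type*} [Field F] (σ : F ≃+* F) (n : ℕ)
    (a₀ a₁ : F) (ha : a₀ * a₁ ≠ 0) (f : Fin n → F)
    (v : Fin (n + 2) → (Fin n → F) × F)
    (hv : ∀ j, (∀ i, σ ((v j).1 i) = (v j).1 i) ∧
      a₁ * σ ((v j).2) + a₀ * (v j).2 = ∑ i, (v j).1 i * f i) :
    ∃ d : Fin (n + 2) → F, (∀ j, σ (d j) = d j) ∧ (∃ j, d j ≠ 0) ∧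
      (∀ i, ∑ j, d j * (v j).1 i = 0) ∧ ∑ j, d j * (v j).2 = 0 := by
  let w : Fin (n + 2) → (Fin n → constants σ) × F :=
    fun j ↦ (fun i ↦ ⟨(v j).1 i, (hv j).1 i⟩, (v j).2)
  have hw : ∀ j, w j ∈ solutionSpace σ a₀ a₁ f := fun j ↦ (mem_solutionSpace σ).2 (hv j).2
  have hrank : Module.rank (constants σ) (solutionSpace σ a₀ a₁ f) < Fintype.card (Fin (n + 2)) :=
    (rank_solutionSpace_le σ a₀ (right_ne_zero_of_mul ha) f).trans_lt <| by
      rw [Fintype.card_fin]; exact_mod_cast Nat.lt_succ_self (n + 1)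
  obtain ⟨g, hg, j₀, hj₀⟩ :=
    Fintype.not_linearIndependent_iff.1 (Submodule.not_linearIndependent_of_rank_lt hw hrank)
  refine ⟨fun j ↦ g j, fun j ↦ (g j).2, ⟨j₀, by simpa using hj₀⟩, fun i ↦ ?_, ?_⟩
  · simpa [w, Prod.fst_sum, Finset.sum_apply, Subfield.smul_def]
      using congrArg (fun p ↦ ((p.1 i : constants σ) : F)) hg
  · simpa [w, Prod.snd_sum, Subfield.smul_def] using congrArg Prod.snd hg
end

section
/- Let (F(t), σ) be a Σ*-extension of (F, σ) with σ(t) = t + f, f ∈ F, and suppose there exist ψ, g ∈ F with σ(g) − g + ψ = f. Then there exists a Σ*-extension (F(s), σ') of (F, σ) with σ'(s) = s + ψ, together with an F-isomorphism τ : F(t) → F(s) satisfying τ(t) = s + g and τ ∘ σ = σ' ∘ τ. -/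
open Polynomial

/-- The translation automorphism `X ↦ X + C g` of `F[X]`. -/
noncomputable def polyShift {F : Type*} [Field F] (g : F) : F[X] ≃ₐ[F] F[X] :=
  AlgEquiv.ofAlgHom (aeval (X + C g)) (aeval (X - C g))
    (by ext; simp) (by ext; simp)

/-- transforming a Σ*-extension along a refined telescoping
solution: σ(g) - g + ψ = f yields an F-isomorphic Σ*-extension with
generator increment ψ, via t ↦ s + g. -/
theorem stmt_8 {F : Type*} [Field F] (σ : F ≃+* F) (f ψ g : F)
    (σt : RatFunc F ≃+* RatFunc F)
    (hext : ∀ x : F, σt (RatFunc.C x) = RatFunc.C (σ x))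
    (ht : σt RatFunc.X = RatFunc.X + RatFunc.C f)
    (hconst : ∀ z : RatFunc F, σt z = z → ∃ x : F, σ x = x ∧ z = RatFunc.C x)
    (hψ : σ g - g + ψ = f) :
    ∃ σs : RatFunc F ≃+* RatFunc F,
      (∀ x : F, σs (RatFunc.C x) = RatFunc.C (σ x)) ∧
      σs RatFunc.X = RatFunc.X + RatFunc.C ψ ∧
      (∀ z : RatFunc F, σs z = z → ∃ x : F, σ x = x ∧ z = RatFunc.C x) ∧
      ∃ τ : RatFunc F ≃+* RatFunc F,
        (∀ x : F, τ (RatFunc.C x) = RatFunc.C x) ∧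
        τ RatFunc.X = RatFunc.X + RatFunc.C g ∧
        ∀ z, τ (σt z) = σs (τ z) := by
  -- the automorphism of RatFunc F induced by X ↦ X + C g
  let τ : RatFunc F ≃+* RatFunc F :=
    IsFractionRing.ringEquivOfRingEquiv (polyShift g).toRingEquiv
  have hτC : ∀ x : F, τ (RatFunc.C x) = RatFunc.C x := by
    intro x
    rw [← RatFunc.algebraMap_C x, show τ = IsFractionRing.ringEquivOfRingEquiv
      (polyShift g).toRingEquiv from rfl, IsFractionRing.ringEquivOfRingEquiv_algebraMap]
    simp [polyShift]
  have hτX : τ RatFunc.X = RatFunc.X + RatFunc.C g := by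
    rw [← RatFunc.algebraMap_X, show τ = IsFractionRing.ringEquivOfRingEquiv
      (polyShift g).toRingEquiv from rfl, IsFractionRing.ringEquivOfRingEquiv_algebraMap]
    simp [polyShift, RatFunc.algebraMap_X, RatFunc.algebraMap_C]
  have hτsC : ∀ x : F, τ.symm (RatFunc.C x) = RatFunc.C x := by
    intro x
    conv_lhs => rw [← hτC x, τ.symm_apply_apply]
  have hτsX : τ.symm RatFunc.X = RatFunc.X - RatFunc.C g := by
    have h : τ (RatFunc.X - RatFunc.C g) = RatFunc.X := by
      rw [map_sub, hτX, hτC]; ring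
    conv_lhs => rw [← h, τ.symm_apply_apply]
  refine ⟨τ.symm.trans (σt.trans τ), ?_, ?_, ?_, τ, hτC, hτX, ?_⟩
  · intro x
    simp [RingEquiv.trans_apply, hτsC, hext, hτC]
  · simp only [RingEquiv.trans_apply, hτsX, map_sub, map_add, ht, hext, hτX, hτC]
    have : ψ = f - σ g + g := by linear_combination hψ
    rw [this, map_add, map_sub]
    ring
  · intro z hz
    simp only [RingEquiv.trans_apply] at hz
    have h1 : σt (τ.symm z) = τ.symm z := by
      have := congrArg τ.symm hz
      simpa using this
    obtain ⟨x, hx, hzx⟩ := hconst _ h1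
    refine ⟨x, hx, ?_⟩
    have := congrArg τ hzx
    simpa [hτC x] using this
  · intro z
    simp [RingEquiv.trans_apply]
end

section
/- Let (G(t₁)…(t_e), σ) be a polynomial Σ*-extension of (G, σ). Then for every g ∈ G(t₁)…(t_e): σ(g) − g ∈ G[t₁, …, t_e] if and only if g ∈ G[t₁, …, t_e]. In particular, if f, g ∈ G(t₁)…(t_e) satisfy the telescoping equation σ(g) − g = f with f ∈ G[t₁, …, t_e], then g ∈ G[t₁, …, t_e]: telescoping over polynomial summands never introduces denominators containing the sum generators tᵢ. -/
/-!
Induct on the number of adjoined generators. At the step `L = K m ⊆ L(x)` with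
`σ x = x + β`, `β ∈ L`, write `g = p(x) / q(x)` with `p, q ∈ L[X]` coprime and `q` monic.
On `L[X]` the automorphism acts as `τ = sigmaShift σ β`: `σ` on coefficients and
`X ↦ X + β`. Clearing denominators in `σ g - g = f(x)` gives
`τ p * q - p * τ q = f * q * τ q`, so `q ∣ τ q` and `τ q ∣ q`, whence `τ q = q`. Then `q(x)`
is a constant of `L(x)`, hence lies in `L`, and by transcendence `q = 1`. Finally, for a
polynomial `p`, the top coefficient of `τ p - p` is `σ a - a` where `a` is the top
coefficient of `p`; the induction hypothesis puts `a` in the polynomial ring of the smaller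
tower, and removing `a * X ^ n` recovers all coefficients.
-/

open Polynomial

namespace Polynomial

theorem mem_liftsRing_subtype_iff {R : Type*} [Ring R] {S : Subring R} {p : R[X]} :
    p ∈ liftsRing S.subtype ↔ ∀ n, p.coeff n ∈ S := by
  simp [← lifts_iff_liftsRing, lifts_iff_coeff_lifts]

theorem C_mem_liftsRing_subtype {R : Type*} [Ring R] {S : Subring R} {a : R} (ha : a ∈ S) :
    C a ∈ liftsRing S.subtype :=
  ⟨C ⟨a, ha⟩, map_C _⟩

theorem X_mem_liftsRing {R S : Type*} [Ring R] [Ring S] (f : R →+* S) : X ∈ liftsRing f :=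
  ⟨X, map_X _⟩

section SigmaShift

variable {R : Type*} [CommSemiring R]

/-- The difference-ring extension of `σ` to `R[X]` with `σ X = X + β`. -/
noncomputable def sigmaShift (σ : R →+* R) (β : R) : R[X] →+* R[X] :=
  (taylorAlgHom β).toRingHom.comp (mapRingHom σ)

theorem sigmaShift_apply (σ : R →+* R) (β : R) (p : R[X]) :
    sigmaShift σ β p = taylor β (p.map σ) := rfl

theorem sigmaShift_C_mul_X_pow (σ : R →+* R) (β a : R) (n : ℕ) :
    sigmaShift σ β (C a * X ^ n) = C (σ a) * (X + C β) ^ n := by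
  simp [sigmaShift_apply]

theorem Monic.sigmaShift {q : R[X]} (hq : q.Monic) (σ : R →+* R) (β : R) :
    (sigmaShift σ β q).Monic := by
  rw [sigmaShift_apply, taylor_apply]
  exact (hq.map σ).comp_X_add_C β

end SigmaShift

theorem coeff_sigmaShift_natDegree {L : Type*} [Field L] (σ : L →+* L) (β : L) (p : L[X]) :
    (sigmaShift σ β p).coeff p.natDegree = σ p.leadingCoeff := by
  rw [sigmaShift_apply, ← natDegree_map σ, coeff_taylor_natDegree, leadingCoeff_map]

theorem mem_liftsRing_of_sigmaShift_sub_mem {L : Type*} [Field L] {σ : L →+* L} {S : Subring L}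
    (hσS : ∀ a ∈ S, σ a ∈ S) {β : L} (hβ : β ∈ S) (hS : ∀ a, σ a - a ∈ S → a ∈ S) (p : L[X])
    (hp : sigmaShift σ β p - p ∈ liftsRing S.subtype) : p ∈ liftsRing S.subtype := by
  induction hn : p.natDegree using Nat.strong_induction_on generalizing p with
  | _ n ih =>
  set lead := C p.leadingCoeff * X ^ p.natDegree
  have hlc : p.leadingCoeff ∈ S := hS _ <| by
    simpa [coeff_sigmaShift_natDegree] using mem_liftsRing_subtype_iff.1 hp p.natDegree
  have hlead : lead ∈ liftsRing S.subtype :=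
    mul_mem (C_mem_liftsRing_subtype hlc) (pow_mem (X_mem_liftsRing _) _)
  have hshift_lead : sigmaShift σ β lead ∈ liftsRing S.subtype := by
    rw [sigmaShift_C_mul_X_pow]
    exact mul_mem (C_mem_liftsRing_subtype (hσS _ hlc))
      (pow_mem (add_mem (X_mem_liftsRing _) (C_mem_liftsRing_subtype hβ)) _)
  have herase : p.eraseLead = p - lead := eq_sub_of_add_eq p.eraseLead_add_C_mul_X_pow
  have hrest : p.eraseLead ∈ liftsRing S.subtype := by
    rcases p.eraseLead_natDegree_lt_or_eraseLead_eq_zero with hlt | hzero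
    · refine ih _ (hn ▸ hlt) _ ?_ rfl
      rw [herase, map_sub]
      convert sub_mem hp (sub_mem hshift_lead hlead) using 1
      ring
    · exact hzero ▸ zero_mem _
  rw [← p.eraseLead_add_C_mul_X_pow]
  exact add_mem hrest hlead

theorem exists_isCoprime_monic_mul_eq {K : Type*} [Field K] (p : K[X]) {q : K[X]}
    (hq : q ≠ 0) : ∃ a b : K[X], IsCoprime a b ∧ b.Monic ∧ p * b = a * q := by
  set r : RatFunc K := algebraMap _ _ p / algebraMap _ _ q
  exact ⟨r.num, r.denom, r.isCoprime_num_denom, r.monic_denom,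
    ((RatFunc.num_mul_eq_mul_denom_iff hq).2 rfl).symm⟩

theorem Monic.eq_one_of_aeval_eq_algebraMap {R A : Type*} [CommRing R] [Ring A] [Algebra R A]
    {x : A} (hx : Transcendental R x) {q : R[X]} (hq : q.Monic) {c : R}
    (hc : aeval x q = algebraMap R A c) : q = 1 := by
  have hqc : q = C c := transcendental_iff_injective.1 hx (by rwa [aeval_C])
  exact eq_one_of_monic_natDegree_zero hq (by rw [hqc, natDegree_C])

end Polynomial

theorem IsCoprime.dvd_and_dvd_of_mul_sub_mul_eq {R : Type*} [CommRing R] {p q p' q' d : R}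
    (h : IsCoprime p q) (h' : IsCoprime p' q') (hd : p' * q - p * q' = d * (q * q')) :
    q ∣ q' ∧ q' ∣ q :=
  ⟨h.symm.dvd_of_dvd_mul_left ⟨p' - d * q', by linear_combination -hd⟩,
    h'.symm.dvd_of_dvd_mul_left ⟨p + d * q, by linear_combination hd⟩⟩

theorem Subfield.closure_union_eq_adjoin {F : Type*} [Field F] (G : Subfield F) (s : Set F) :
    Subfield.closure (↑G ∪ s) = (IntermediateField.adjoin G s).toSubfield := by
  rw [IntermediateField.adjoin_toSubfield, ← Subtype.range_coe (s := (G : Set F))]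
  rfl

theorem Subfield.closure_union_closure_left {F : Type*} [Field F] (s u : Set F) :
    Subfield.closure (↑(Subfield.closure s) ∪ u) = Subfield.closure (s ∪ u) := by
  rw [Subfield.closure_union, Subfield.closure_union, Subfield.closure_eq]

theorem Algebra.adjoin_subset_closure_union {F : Type*} [Field F] (G : Subfield F) (s : Set F) :
    (Algebra.adjoin G s : Set F) ⊆ Subfield.closure (↑G ∪ s) := by
  rw [Subfield.closure_union_eq_adjoin]
  exact IntermediateField.algebra_adjoin_le_adjoin G s

theorem Algebra.map_mem_adjoin {R A : Type*} [CommRing R] [Ring A] [Algebra R A] (σ : A →+* A)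
    {s : Set A} (hR : ∀ r, σ (algebraMap R A r) ∈ Algebra.adjoin R s)
    (hs : ∀ y ∈ s, σ y ∈ Algebra.adjoin R s) {a : A} (ha : a ∈ Algebra.adjoin R s) :
    σ a ∈ Algebra.adjoin R s := by
  induction ha using Algebra.adjoin_induction with
  | mem y hy => exact hs y hy
  | algebraMap r => exact hR r
  | add y z _ _ hy hz => exact (map_add σ y z) ▸ add_mem hy hz
  | mul y z _ _ hy hz => exact (map_mul σ y z) ▸ mul_mem hy hz

section SimpleExtension

variable {F : Type*} [Field F] {L : Subfield F} {x : F}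

theorem aeval_mem_closure_union_singleton (q : L[X]) :
    aeval x q ∈ Subfield.closure (↑L ∪ {x}) := by
  rw [Subfield.closure_union_eq_adjoin]
  exact IntermediateField.algebra_adjoin_le_adjoin L {x} (aeval_mem_adjoin_singleton L x)

theorem exists_isCoprime_monic_of_mem_closure (hx : Transcendental L x) {g : F}
    (hg : g ∈ Subfield.closure (↑L ∪ {x})) :
    ∃ p q : L[X], IsCoprime p q ∧ q.Monic ∧ g = aeval x p / aeval x q := by
  rw [Subfield.closure_union_eq_adjoin, IntermediateField.mem_toSubfield,
    IntermediateField.mem_adjoin_simple_iff] at hg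
  obtain ⟨p, q, rfl⟩ := hg
  by_cases hq : q = 0
  · exact ⟨0, 1, isCoprime_zero_left.2 isUnit_one, monic_one, by simp [hq]⟩
  obtain ⟨a, b, hab, hb, h⟩ := exists_isCoprime_monic_mul_eq p hq
  refine ⟨a, b, hab, hb, ?_⟩
  have hne : ∀ {r : L[X]}, r ≠ 0 → aeval x r ≠ 0 := fun hr h => hx ⟨_, hr, h⟩
  rw [div_eq_div_iff (hne hq) (hne hb.ne_zero), ← map_mul, ← map_mul, h]

theorem map_aeval_eq_aeval_sigmaShift (σ : F →+* F) (hσL : ∀ a ∈ L, σ a ∈ L) {β : L}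
    (hβ : σ x = x + β) (p : L[X]) :
    σ (aeval x p) = aeval x (sigmaShift (σ.restrict L L hσL) β p) := by
  show (σ.comp (aeval x).toRingHom) p = ((aeval x).toRingHom.comp (sigmaShift _ β)) p
  congr 1
  refine Polynomial.ringHom_ext (fun a => ?_) ?_
  · simp [sigmaShift_apply]; rfl
  · simp [sigmaShift_apply, hβ]; rfl

theorem denom_eq_one_of_sub_eq_aeval (σ : F →+* F) (hσL : ∀ a ∈ L, σ a ∈ L)
    (hx : Transcendental L x) {β : L} (hβ : σ x = x + β)
    (hconst : ∀ c ∈ Subfield.closure (↑L ∪ {x}), σ c = c → c ∈ L)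
    {p q f : L[X]} (hpq : IsCoprime p q) (hq : q.Monic)
    (hf : σ (aeval x p / aeval x q) - aeval x p / aeval x q = aeval x f) : q = 1 := by
  set τ := sigmaShift (σ.restrict L L hσL) β
  have hne : ∀ {r : L[X]}, r.Monic → aeval x r ≠ 0 := fun hr h => hx ⟨_, hr.ne_zero, h⟩
  have hτq : (τ q).Monic := hq.sigmaShift _ _
  have hid : τ p * q - p * τ q = f * (q * τ q) := by
    apply transcendental_iff_injective.1 hx
    rw [map_div₀, map_aeval_eq_aeval_sigmaShift σ hσL hβ, map_aeval_eq_aeval_sigmaShift σ hσL hβ,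
      div_sub_div _ _ (hne hτq) (hne hq), div_eq_iff (mul_ne_zero (hne hτq) (hne hq))] at hf
    simp only [map_sub, map_mul]
    linear_combination hf
  obtain ⟨hdvd, hdvd'⟩ := hpq.dvd_and_dvd_of_mul_sub_mul_eq (hpq.map τ) hid
  have hfix : τ q = q := eq_of_monic_of_associated hτq hq (associated_of_dvd_dvd hdvd' hdvd)
  have hc : aeval x q ∈ L := hconst _ (aeval_mem_closure_union_singleton q)
    (by rw [map_aeval_eq_aeval_sigmaShift σ hσL hβ, hfix])
  exact hq.eq_one_of_aeval_eq_algebraMap hx (c := ⟨_, hc⟩) rfl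

theorem mem_adjoin_insert_iff_exists_aeval {R : Type*} [CommRing R] [Algebra R F]
    {S : Subalgebra R F} (hSL : ∀ a ∈ S, a ∈ L) {z : F} :
    z ∈ Algebra.adjoin R (insert x (S : Set F)) ↔
      ∃ p ∈ liftsRing (S.toSubring.comap L.subtype).subtype, aeval x p = z := by
  constructor
  · intro hz
    induction hz using Algebra.adjoin_induction with
    | mem y hy =>
      rcases hy with rfl | hy
      · exact ⟨X, X_mem_liftsRing _, aeval_X _⟩
      · exact ⟨C ⟨y, hSL y hy⟩, C_mem_liftsRing_subtype hy, aeval_C _ _⟩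
    | algebraMap r =>
      exact ⟨C ⟨_, hSL _ (S.algebraMap_mem r)⟩, C_mem_liftsRing_subtype (S.algebraMap_mem r),
        aeval_C _ _⟩
    | add y z _ _ hy hz =>
      obtain ⟨p, hp, rfl⟩ := hy
      obtain ⟨q, hq, rfl⟩ := hz
      exact ⟨p + q, add_mem hp hq, map_add _ _ _⟩
    | mul y z _ _ hy hz =>
      obtain ⟨p, hp, rfl⟩ := hy
      obtain ⟨q, hq, rfl⟩ := hz
      exact ⟨p * q, mul_mem hp hq, map_mul _ _ _⟩
  · rintro ⟨p, hp, rfl⟩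
    rw [aeval_eq_sum_range]
    refine Subalgebra.sum_mem _ fun i _ => ?_
    rw [Algebra.smul_def]
    exact mul_mem
      (Algebra.subset_adjoin (Set.mem_insert_of_mem _ (mem_liftsRing_subtype_iff.1 hp i)))
      (pow_mem (Algebra.subset_adjoin (Set.mem_insert _ _)) _)

theorem mem_adjoin_insert_of_sub_mem {R : Type*} [CommRing R] [Algebra R F] (σ : F →+* F)
    (hσL : ∀ a ∈ L, σ a ∈ L) {S : Subalgebra R F} (hSL : ∀ a ∈ S, a ∈ L)
    (hσS : ∀ a ∈ S, σ a ∈ S) (hS : ∀ a ∈ L, σ a - a ∈ S → a ∈ S)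
    (hx : Transcendental L x) (hxS : σ x - x ∈ S)
    (hconst : ∀ c ∈ Subfield.closure (↑L ∪ {x}), σ c = c → c ∈ L)
    {g : F} (hg : g ∈ Subfield.closure (↑L ∪ {x}))
    (hgS : σ g - g ∈ Algebra.adjoin R (insert x (S : Set F))) :
    g ∈ Algebra.adjoin R (insert x (S : Set F)) := by
  set β : L := ⟨σ x - x, hSL _ hxS⟩
  have hβ : σ x = x + β := by simp [β]
  obtain ⟨p, q, hpq, hq, rfl⟩ := exists_isCoprime_monic_of_mem_closure hx hg
  obtain ⟨f, hf, hfg⟩ := (mem_adjoin_insert_iff_exists_aeval hSL).1 hgS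
  obtain rfl : q = 1 := denom_eq_one_of_sub_eq_aeval σ hσL hx hβ hconst hpq hq hfg.symm
  rw [map_one, div_one, map_aeval_eq_aeval_sigmaShift σ hσL hβ, ← map_sub] at hfg
  rw [transcendental_iff_injective.1 hx hfg] at hf
  refine (mem_adjoin_insert_iff_exists_aeval hSL).2 ⟨p, ?_, by rw [map_one, div_one]⟩
  exact mem_liftsRing_of_sigmaShift_sub_mem (σ := σ.restrict L L hσL)
    (S := S.toSubring.comap L.subtype) (β := β) (fun a ha => hσS _ ha) hxS
    (fun a ha => hS a a.2 ha) p hf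

end SimpleExtension

section Tower

variable {α : Type*} {e : ℕ} (t : Fin e → α)

theorem image_val_lt_succ {m : ℕ} (hm : m < e) :
    t '' {j : Fin e | (j : ℕ) < m + 1} = insert (t ⟨m, hm⟩) (t '' {j | (j : ℕ) < m}) := by
  ext y
  simp only [Set.mem_image, Set.mem_ofPred_eq, Set.mem_insert_iff, Nat.lt_succ_iff_lt_or_eq]
  constructor
  · rintro ⟨j, hj | hj, rfl⟩
    · exact Or.inr ⟨j, hj, rfl⟩
    · exact Or.inl (congrArg t (Fin.ext hj))
  · rintro (rfl | ⟨j, hj, rfl⟩)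
    · exact ⟨_, Or.inr rfl, rfl⟩
    · exact ⟨j, Or.inl hj, rfl⟩

theorem image_val_lt_mono {m m' : ℕ} (h : m ≤ m') :
    t '' {j : Fin e | (j : ℕ) < m} ⊆ t '' {j | (j : ℕ) < m'} :=
  Set.image_mono fun _ hj => lt_of_lt_of_le hj h

end Tower

section SumTower

variable {F : Type*} [Field F] (σ : F ≃+* F) (G : Subfield F) {e : ℕ} (t : Fin e → F)

theorem map_mem_adjoin_image_lt (hG : ∀ x, x ∈ G ↔ σ x ∈ G)
    (hshift : ∀ i : Fin e, σ (t i) - t i ∈ Algebra.adjoin (↥G) (t '' {j : Fin e | j < i}))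
    (m : ℕ) : ∀ a ∈ Algebra.adjoin G (t '' {j : Fin e | (j : ℕ) < m}),
      σ a ∈ Algebra.adjoin G (t '' {j : Fin e | (j : ℕ) < m}) := by
  refine fun a ha => Algebra.map_mem_adjoin (σ : F →+* F) (fun r => ?_) ?_ ha
  · exact Subalgebra.algebraMap_mem _ (⟨σ r, (hG r).1 r.2⟩ : G)
  · rintro _ ⟨j, hj, rfl⟩
    show σ (t j) ∈ _
    rw [← add_sub_cancel (t j) (σ (t j))]
    exact add_mem (Algebra.subset_adjoin ⟨j, hj, rfl⟩)
      (Algebra.adjoin_mono (image_val_lt_mono t hj.le) (hshift j))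

theorem map_mem_tower (K : ℕ → Subfield F)
    (hK : ∀ i, K i = Subfield.closure (↑G ∪ t '' {j : Fin e | (j : ℕ) < i}))
    (hG : ∀ x, x ∈ G ↔ σ x ∈ G)
    (hshift : ∀ i : Fin e, σ (t i) - t i ∈ Algebra.adjoin (↥G) (t '' {j : Fin e | j < i}))
    (m : ℕ) : ∀ a ∈ K m, σ a ∈ K m := by
  rw [hK]
  refine fun a ha => (Subfield.closure_le.2 ?_ : _ ≤ (Subfield.closure _).comap (σ : F →+* F)) ha
  rintro y (hy | ⟨j, hj, rfl⟩)
  · exact Subfield.subset_closure (Or.inl ((hG y).1 hy))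
  · show σ (t j) ∈ Subfield.closure _
    rw [← add_sub_cancel (t j) (σ (t j))]
    refine add_mem (Subfield.subset_closure (Or.inr ⟨j, hj, rfl⟩)) ?_
    exact Algebra.adjoin_subset_closure_union G _
      (Algebra.adjoin_mono (image_val_lt_mono t hj.le) (hshift j))

theorem tower_succ_eq_closure (K : ℕ → Subfield F)
    (hK : ∀ i, K i = Subfield.closure (↑G ∪ t '' {j : Fin e | (j : ℕ) < i}))
    {m : ℕ} (hm : m < e) : K (m + 1) = Subfield.closure (↑(K m) ∪ {t ⟨m, hm⟩}) := by
  rw [hK, hK, image_val_lt_succ t hm, Subfield.closure_union_closure_left, Set.union_insert,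
    Set.union_singleton]

theorem mem_adjoin_of_sub_mem_adjoin (K : ℕ → Subfield F)
    (hK : ∀ i, K i = Subfield.closure (↑G ∪ t '' {j : Fin e | (j : ℕ) < i}))
    (hG : ∀ x, x ∈ G ↔ σ x ∈ G)
    (htrans : ∀ i : Fin e, Transcendental (↥(K (i : ℕ))) (t i))
    (hshift : ∀ i : Fin e, σ (t i) - t i ∈ Algebra.adjoin (↥G) (t '' {j : Fin e | j < i}))
    (hconst : ∀ i : ℕ, i ≤ e → ∀ c ∈ K i, σ c = c → c ∈ G) :
    ∀ m ≤ e, ∀ g ∈ K m, σ g - g ∈ Algebra.adjoin G (t '' {j : Fin e | (j : ℕ) < m}) →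
      g ∈ Algebra.adjoin G (t '' {j : Fin e | (j : ℕ) < m}) := by
  intro m
  induction m with
  | zero =>
    intro _ g hg _
    simp only [hK, Nat.not_lt_zero, Set.ofPred_false, Set.image_empty, Set.union_empty,
      Subfield.closure_eq] at hg
    exact Subalgebra.algebraMap_mem _ (⟨g, hg⟩ : G)
  | succ m ih =>
    intro hm g hg hgS
    have hGK : ∀ c ∈ G, c ∈ K m := fun c hc => hK m ▸ Subfield.subset_closure (Or.inl hc)
    rw [tower_succ_eq_closure G t K hK hm] at hg
    rw [image_val_lt_succ t hm, ← Algebra.adjoin_insert_adjoin] at hgS ⊢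
    refine mem_adjoin_insert_of_sub_mem (σ : F →+* F) (L := K m)
      (map_mem_tower σ G t K hK hG hshift m)
      (fun a ha => hK m ▸ Algebra.adjoin_subset_closure_union G _ ha)
      (map_mem_adjoin_image_lt σ G t hG hshift m) (ih (Nat.le_of_succ_le hm))
      (htrans ⟨m, hm⟩) (hshift ⟨m, hm⟩)
      (fun c hc hfix => hGK c (hconst (m + 1) hm c ?_ hfix)) hg hgS
    rwa [tower_succ_eq_closure G t K hK hm]

end SumTower

/-- in a polynomial Σ*-extension, σ(g) - g is a polynomial in
the generators iff g is; telescoping over polynomial summands never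
introduces denominators. -/
theorem stmt_11 {F : Type*} [Field F] (σ : F ≃+* F) (G : Subfield F)
    (e : ℕ) (t : Fin e → F)
    (K : ℕ → Subfield F)
    (hK : ∀ i, K i = Subfield.closure (↑G ∪ t '' {j : Fin e | (j : ℕ) < i}))
    (hG : ∀ x, x ∈ G ↔ σ x ∈ G)
    (htrans : ∀ i : Fin e, Transcendental (↥(K (i : ℕ))) (t i))
    (hshift : ∀ i : Fin e, σ (t i) - t i ∈
      Algebra.adjoin (↥G) (t '' {j : Fin e | j < i}))
    (hconst : ∀ i : ℕ, i ≤ e → ∀ c ∈ K i, σ c = c → c ∈ G) :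
    (∀ g ∈ K e, (σ g - g ∈ Algebra.adjoin (↥G) (Set.range t) ↔
      g ∈ Algebra.adjoin (↥G) (Set.range t))) ∧
    (∀ f ∈ Algebra.adjoin (↥G) (Set.range t), ∀ g ∈ K e,
      σ g - g = f → g ∈ Algebra.adjoin (↥G) (Set.range t)) := by
  have hrange : t '' {j : Fin e | (j : ℕ) < e} = Set.range t := by simp [Fin.is_lt]
  have hdesc := mem_adjoin_of_sub_mem_adjoin σ G t K hK hG htrans hshift hconst e le_rfl
  have hinv := map_mem_adjoin_image_lt σ G t hG hshift e
  rw [hrange] at hdesc hinv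
  exact ⟨fun g hg => ⟨hdesc g hg, fun h => sub_mem (hinv g h) h⟩,
    fun f hf g hg hfg => hdesc g hg (hfg ▸ hf)⟩
end
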